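/- Let s > 1/2. There is a constant c > 0, depending only on s, such that for all m ∈ ℤ and all M ∈ ℕ: (a) Σ_{n∈ℤ} ⟨n⟩^{−(2s+1)}⟨m−n⟩^{−1} ≤ c·⟨m⟩^{−1}; and (b) Σ_{n∈ℤ, |n|≥M} ⟨n⟩^{−(2s+1)}⟨m−n⟩^{−1} ≤ c·⟨m⟩^{−1}·( 1_{{|m| ≥ 2M/3}} + ⟨M⟩^{−2s} ). -/

import Mathlib

/-- The Japanese bracket `⟨n⟩ = (1+n²)^{1/2}` of an integer. -/
noncomputable def jap (n : ℤ) : ℝ := Real.sqrt (1 + (n : ℝ) ^ 2)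

/-!
Peetre's inequality `⟨m⟩ ≤ √2 ⟨n⟩ ⟨m - n⟩` bounds the `n`-th term of (a) by
`√2 ⟨m⟩⁻¹ ⟨n⟩^{-2s}`, which is summable because `2s > 1`. For (b) it suffices, by (a), to
treat `|m| < 2M/3`. Then `|n| ≥ M` forces `⟨n⟩ ≤ 3 ⟨m - n⟩`, so the tail is at most
`3 ∑_{|n| ≥ M} ⟨n⟩^{-(2s+2)}`, which the integral test bounds by a multiple of
`⟨M⟩^{-(2s+1)} ≤ ⟨M⟩^{-2s} ⟨m⟩⁻¹`.
-/

open Real Set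

lemma tsum_le_tsum_of_nonneg_of_le {ι : Type*} {f g : ι → ℝ} (hf : ∀ i, 0 ≤ f i)
    (h : ∀ i, f i ≤ g i) (hg : Summable g) : ∑' i, f i ≤ ∑' i, g i :=
  (hg.of_nonneg_of_le hf h).tsum_le_tsum h hg

lemma tsum_int_le_two_mul_tsum_nat {g : ℤ → ℝ} (hg : Summable g) (heven : g.Even)
    (h0 : 0 ≤ g 0) : ∑' n, g n ≤ 2 * ∑' n : ℕ, g n := by
  have h := tsum_nat_add_neg hg
  simp only [heven _, ← two_mul, tsum_mul_left] at h
  linarith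

lemma tsum_nat_add_rpow_neg_le {r : ℝ} (hr : 0 < r) {M : ℕ} (hM : 1 ≤ M) :
    ∑' k : ℕ, ((k + M : ℕ) : ℝ) ^ (-(r + 1)) ≤ (1 + 1 / r) * (M : ℝ) ^ (-r) := by
  have hM0 : (0 : ℝ) < M := by exact_mod_cast hM
  have hexp : -(r + 1) < -1 := by linarith
  have anti : AntitoneOn (fun x : ℝ ↦ x ^ (-(r + 1))) (Ici (M : ℝ)) := fun x hx y _ hxy ↦
    rpow_le_rpow_of_nonpos (hM0.trans_le hx) hxy (by linarith)
  have htail := anti.tsum_comp_add_le_integral M (integrableOn_Ioi_rpow_of_lt hexp hM0)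
    fun t ht ↦ rpow_nonneg (hM0.trans ht).le _
  rw [integral_Ioi_rpow_of_lt hexp hM0, show -(r + 1) + 1 = -r by ring, neg_div_neg_eq] at htail
  have hsum : Summable fun k : ℕ ↦ ((k + M : ℕ) : ℝ) ^ (-(r + 1)) :=
    (summable_nat_add_iff M).2 (Real.summable_nat_rpow.2 hexp)
  have hfirst : (M : ℝ) ^ (-(r + 1)) ≤ (M : ℝ) ^ (-r) :=
    rpow_le_rpow_of_exponent_le (by exact_mod_cast hM) (by linarith)
  rw [hsum.tsum_eq_zero_add]
  simp only [zero_add, add_right_comm _ 1 M]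
  calc _ ≤ (M : ℝ) ^ (-r) + (M : ℝ) ^ (-r) / r := add_le_add hfirst htail
    _ = _ := by ring

lemma one_le_jap (n : ℤ) : 1 ≤ jap n :=
  one_le_sqrt.2 (le_add_of_nonneg_right (sq_nonneg _))

lemma jap_pos (n : ℤ) : 0 < jap n :=
  one_pos.trans_le (one_le_jap n)

lemma abs_le_jap (n : ℤ) : |(n : ℝ)| ≤ jap n :=
  abs_le_sqrt (le_add_of_nonneg_left zero_le_one)

lemma jap_neg (n : ℤ) : jap (-n) = jap n := by
  simp [jap]

lemma jap_le_jap {a b : ℤ} (h : |(a : ℝ)| ≤ |(b : ℝ)|) : jap a ≤ jap b :=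
  sqrt_le_sqrt (add_le_add_right (sq_le_sq.2 h) 1)

lemma jap_le_sqrt_two_mul_jap_mul_jap_sub (m n : ℤ) :
    jap m ≤ √2 * (jap n * jap (m - n)) := by
  rw [jap, jap, jap, ← sqrt_mul (by positivity), ← sqrt_mul (by norm_num)]
  apply sqrt_le_sqrt
  push_cast
  nlinarith [sq_nonneg ((m : ℝ) - 2 * n), sq_nonneg ((n : ℝ) * (m - n))]

lemma jap_le_three_mul_jap_sub {m n : ℤ} (h : 3 * |(m : ℝ)| ≤ 2 * |(n : ℝ)|) :
    jap n ≤ 3 * jap (m - n) := by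
  have hmn : |(n : ℝ)| ≤ 3 * |(m : ℝ) - n| := by
    linarith [abs_sub_abs_le_abs_sub (n : ℝ) m, abs_sub_comm (n : ℝ) m]
  have h3 : (3 : ℝ) = √9 := by rw [show (9 : ℝ) = 3 ^ 2 by norm_num, sqrt_sq (by norm_num)]
  rw [jap, jap, h3, ← sqrt_mul (by norm_num)]
  apply sqrt_le_sqrt
  push_cast
  have hsq := pow_le_pow_left₀ (abs_nonneg _) hmn 2
  rw [mul_pow, sq_abs, sq_abs] at hsq
  linarith

lemma jap_natCast_le {M : ℕ} (hM : 1 ≤ M) : jap M ≤ √2 * M := by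
  have hM' : (1 : ℝ) ≤ M := by exact_mod_cast hM
  rw [jap, ← sqrt_sq (by positivity : (0 : ℝ) ≤ M), ← sqrt_mul (by norm_num)]
  exact sqrt_le_sqrt (by push_cast; nlinarith)

lemma jap_rpow_neg_add_one (n : ℤ) (a : ℝ) :
    jap n ^ (-(a + 1)) = jap n ^ (-a) * (jap n)⁻¹ := by
  rw [neg_add, rpow_add (jap_pos n), rpow_neg_one]

lemma summable_jap_rpow_neg {r : ℝ} (hr : 1 < r) : Summable fun n : ℤ ↦ jap n ^ (-r) := by
  refine Summable.of_norm_bounded_eventually (summable_abs_int_rpow hr) ?_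
  filter_upwards [(Set.finite_singleton (0 : ℤ)).compl_mem_cofinite] with n hn
  have hn0 : 0 < |(n : ℝ)| := abs_pos.2 (Int.cast_ne_zero.2 hn)
  rw [norm_of_nonneg (rpow_nonneg (jap_pos n).le _)]
  exact rpow_le_rpow_of_nonpos hn0 (abs_le_jap n) (by linarith)
lemma natCast_rpow_neg_le {M : ℕ} (hM : 1 ≤ M) {r : ℝ} (hr : 0 ≤ r) :
    (M : ℝ) ^ (-r) ≤ √2 ^ r * jap M ^ (-r) := by
  have hM0 : (0 : ℝ) < M := by exact_mod_cast hM
  have h2 : (0 : ℝ) < √2 ^ r := rpow_pos_of_pos (by positivity) r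
  calc (M : ℝ) ^ (-r) = √2 ^ r * (√2 * M) ^ (-r) := by
        rw [mul_rpow (sqrt_nonneg 2) hM0.le, rpow_neg (sqrt_nonneg 2), ← mul_assoc,
          mul_inv_cancel₀ h2.ne', one_mul]
    _ ≤ √2 ^ r * jap M ^ (-r) := mul_le_mul_of_nonneg_left
        (rpow_le_rpow_of_nonpos (jap_pos M) (jap_natCast_le hM) (neg_nonpos.2 hr)) h2.le

lemma exists_tsum_ite_le_abs_jap_rpow_neg_le {r : ℝ} (hr : 0 < r) :
    ∃ C > 0, ∀ M : ℕ, 1 ≤ M →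
      ∑' n : ℤ, (if (M : ℤ) ≤ |n| then jap n ^ (-(r + 1)) else 0) ≤ C * jap M ^ (-r) := by
  refine ⟨2 * ((1 + 1 / r) * √2 ^ r), by positivity, fun M hM ↦ ?_⟩
  set T : ℤ → ℝ := fun n ↦ if (M : ℤ) ≤ |n| then jap n ^ (-(r + 1)) else 0
  have hT : Summable T :=
    (summable_jap_rpow_neg (by linarith : 1 < r + 1)).summable_of_eq_zero_or_self fun n ↦ by
      simp only [T]; split_ifs <;> simp
  have hT0 : ∀ n, 0 ≤ T n := fun n ↦ by
    simp only [T]; split_ifs <;> simp [rpow_nonneg (jap_pos n).le]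
  have hTeven : T.Even := fun n ↦ by simp only [T, abs_neg, jap_neg]
  have hTnat : Summable fun k : ℕ ↦ T k := hT.comp_injective Nat.cast_injective
  have hshift : ∑' k : ℕ, T k = ∑' k : ℕ, T (k + M : ℕ) := by
    rw [← hTnat.sum_add_tsum_nat_add M,
      Finset.sum_eq_zero fun k hk ↦ if_neg (by rw [Nat.abs_cast]; simp at hk; omega), zero_add]
  have hle : ∀ k : ℕ, T (k + M : ℕ) ≤ ((k + M : ℕ) : ℝ) ^ (-(r + 1)) := fun k ↦ by
    have hpos : (0 : ℝ) < (k + M : ℕ) := by exact_mod_cast (by omega : 0 < k + M)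
    have hkM : (M : ℤ) ≤ |((k + M : ℕ) : ℤ)| := by rw [Nat.abs_cast]; omega
    simp only [T, if_pos hkM]
    refine rpow_le_rpow_of_nonpos hpos ?_ (by linarith)
    rw [← Nat.abs_cast (R := ℝ), ← Int.cast_natCast]
    exact abs_le_jap _
  calc ∑' n, T n ≤ 2 * ∑' k : ℕ, T (k + M : ℕ) :=
        hshift ▸ tsum_int_le_two_mul_tsum_nat hT hTeven (hT0 0)
    _ ≤ 2 * ((1 + 1 / r) * (M : ℝ) ^ (-r)) := by
        gcongr
        exact (tsum_le_tsum_of_nonneg_of_le (fun k ↦ hT0 _) hle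
          ((summable_nat_add_iff M).2 (summable_nat_rpow.2 (by linarith)))).trans
          (tsum_nat_add_rpow_neg_le hr hM)
    _ ≤ 2 * ((1 + 1 / r) * (√2 ^ r * jap M ^ (-r))) := by
        gcongr
        exact natCast_rpow_neg_le hM hr.le
    _ = _ := by ring

lemma jap_rpow_mul_inv_jap_sub_le (a : ℝ) (m n : ℤ) :
    jap n ^ (-(a + 1)) * (jap (m - n))⁻¹ ≤ √2 * (jap m)⁻¹ * jap n ^ (-a) := by
  have hpeetre : (jap n * jap (m - n))⁻¹ ≤ √2 * (jap m)⁻¹ := by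
    rw [← div_eq_mul_inv, le_div_iff₀ (jap_pos m), inv_mul_le_iff₀ (by
      exact mul_pos (jap_pos n) (jap_pos _))]
    simpa [mul_comm] using jap_le_sqrt_two_mul_jap_mul_jap_sub m n
  calc jap n ^ (-(a + 1)) * (jap (m - n))⁻¹ = jap n ^ (-a) * (jap n * jap (m - n))⁻¹ := by
        rw [jap_rpow_neg_add_one, mul_inv, mul_assoc]
    _ ≤ jap n ^ (-a) * (√2 * (jap m)⁻¹) :=
        mul_le_mul_of_nonneg_left hpeetre (rpow_nonneg (jap_pos n).le _)
    _ = _ := by ring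

lemma jap_rpow_mul_inv_jap_sub_nonneg (a : ℝ) (m n : ℤ) :
    0 ≤ jap n ^ (-a) * (jap (m - n))⁻¹ :=
  mul_nonneg (rpow_nonneg (jap_pos n).le _) (inv_nonneg.2 (jap_pos _).le)

lemma summable_jap_rpow_mul_inv_jap_sub {r : ℝ} (hr : 1 < r) (m : ℤ) :
    Summable fun n ↦ jap n ^ (-(r + 1)) * (jap (m - n))⁻¹ :=
  ((summable_jap_rpow_neg hr).mul_left (√2 * (jap m)⁻¹)).of_nonneg_of_le
    (jap_rpow_mul_inv_jap_sub_nonneg _ m) (jap_rpow_mul_inv_jap_sub_le r m)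

lemma tsum_jap_rpow_mul_inv_jap_sub_le {r : ℝ} (hr : 1 < r) (m : ℤ) :
    ∑' n, jap n ^ (-(r + 1)) * (jap (m - n))⁻¹
      ≤ √2 * (∑' n, jap n ^ (-r)) * (jap m)⁻¹ := by
  calc _ ≤ ∑' n, √2 * (jap m)⁻¹ * jap n ^ (-r) :=
        tsum_le_tsum_of_nonneg_of_le (jap_rpow_mul_inv_jap_sub_nonneg _ m)
          (jap_rpow_mul_inv_jap_sub_le r m) ((summable_jap_rpow_neg hr).mul_left _)
    _ = _ := by rw [tsum_mul_left]; ring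

lemma exists_tsum_ite_le_abs_jap_rpow_mul_inv_jap_sub_le {r : ℝ} (hr : -1 < r) :
    ∃ C > 0, ∀ (m : ℤ) (M : ℕ), |(m : ℝ)| < 2 * M / 3 →
      ∑' n : ℤ, (if (M : ℤ) ≤ |n| then jap n ^ (-(r + 1)) * (jap (m - n))⁻¹ else 0)
        ≤ C * (jap m)⁻¹ * jap M ^ (-r) := by
  obtain ⟨C, hC, htail⟩ := exists_tsum_ite_le_abs_jap_rpow_neg_le (r := r + 1) (by linarith)
  refine ⟨3 * C, by positivity, fun m M hm ↦ ?_⟩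
  have hM : 1 ≤ M := by
    have : (0 : ℝ) < M := by linarith [abs_nonneg (m : ℝ)]
    exact_mod_cast this
  have hpt : ∀ n : ℤ, (if (M : ℤ) ≤ |n| then jap n ^ (-(r + 1)) * (jap (m - n))⁻¹ else 0)
      ≤ 3 * (if (M : ℤ) ≤ |n| then jap n ^ (-(r + 1 + 1)) else 0) := fun n ↦ by
    split_ifs with hn
    · have hn' : (M : ℝ) ≤ |(n : ℝ)| := by exact_mod_cast hn
      have hj := jap_le_three_mul_jap_sub (m := m) (n := n) (by linarith)
      have hinv : (jap (m - n))⁻¹ ≤ 3 * (jap n)⁻¹ := by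
        rw [← div_eq_mul_inv, le_div_iff₀ (jap_pos n), inv_mul_le_iff₀ (jap_pos _)]
        linarith
      calc _ ≤ jap n ^ (-(r + 1)) * (3 * (jap n)⁻¹) :=
            mul_le_mul_of_nonneg_left hinv (rpow_nonneg (jap_pos n).le _)
        _ = _ := by rw [jap_rpow_neg_add_one n (r + 1)]; ring
    · simp
  have hmM : (jap M)⁻¹ ≤ (jap m)⁻¹ :=
    inv_anti₀ (jap_pos m) (jap_le_jap (by push_cast; rw [Nat.abs_cast]; linarith))
  calc _ ≤ ∑' n : ℤ, 3 * (if (M : ℤ) ≤ |n| then jap n ^ (-(r + 1 + 1)) else 0) :=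
        tsum_le_tsum_of_nonneg_of_le
          (fun n ↦ ite_nonneg (jap_rpow_mul_inv_jap_sub_nonneg _ m n) le_rfl) hpt
          (((summable_jap_rpow_neg (by linarith : 1 < r + 1 + 1)).summable_of_eq_zero_or_self
            fun n ↦ by split_ifs <;> simp).mul_left 3)
    _ ≤ 3 * (C * jap M ^ (-(r + 1))) := by
        rw [tsum_mul_left]; exact mul_le_mul_of_nonneg_left (htail M hM) (by norm_num)
    _ = 3 * C * jap M ^ (-r) * (jap M)⁻¹ := by rw [jap_rpow_neg_add_one]; ring
    _ ≤ 3 * C * jap M ^ (-r) * (jap m)⁻¹ :=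
        mul_le_mul_of_nonneg_left hmM (by have := rpow_nonneg (jap_pos M).le (-r); positivity)
    _ = _ := by ring

/-- Convolution estimates with exponents `2s+1` and `1`, for `s > 1/2`. -/
theorem statement7 (s : ℝ) (hs : 1 / 2 < s) :
    ∃ c > 0, ∀ (m : ℤ) (M : ℕ),
      (∑' n : ℤ, jap n ^ (-(2 * s + 1)) * jap (m - n) ^ (-(1 : ℝ))
          ≤ c * jap m ^ (-(1 : ℝ))) ∧
      (∑' n : ℤ, (if (M : ℤ) ≤ |n| then
            jap n ^ (-(2 * s + 1)) * jap (m - n) ^ (-(1 : ℝ)) else 0)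
          ≤ c * jap m ^ (-(1 : ℝ)) *
            ((if 2 * (M : ℝ) / 3 ≤ |(m : ℝ)| then (1 : ℝ) else 0)
              + jap (M : ℤ) ^ (-(2 * s)))) := by
  have hr : 1 < 2 * s := by linarith
  obtain ⟨C, hC, hfar⟩ :=
    exists_tsum_ite_le_abs_jap_rpow_mul_inv_jap_sub_le (r := 2 * s) (by linarith)
  set A := √2 * ∑' n, jap n ^ (-(2 * s))
  have hA : 0 ≤ A :=
    mul_nonneg (sqrt_nonneg 2) (tsum_nonneg fun n ↦ rpow_nonneg (jap_pos n).le _)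
  refine ⟨A + C, by positivity, fun m M ↦ ?_⟩
  simp only [rpow_neg_one]
  have hnear : ∑' n, jap n ^ (-(2 * s + 1)) * (jap (m - n))⁻¹ ≤ (A + C) * (jap m)⁻¹ :=
    (tsum_jap_rpow_mul_inv_jap_sub_le hr m).trans
      (mul_le_mul_of_nonneg_right (by linarith) (inv_nonneg.2 (jap_pos m).le))
  refine ⟨hnear, ?_⟩
  have hM0 : 0 ≤ jap M ^ (-(2 * s)) := rpow_nonneg (jap_pos _).le _
  split_ifs with hm
  · calc _ ≤ ∑' n, jap n ^ (-(2 * s + 1)) * (jap (m - n))⁻¹ :=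
          tsum_le_tsum_of_nonneg_of_le
            (fun n ↦ ite_nonneg (jap_rpow_mul_inv_jap_sub_nonneg _ m n) le_rfl)
            (fun n ↦ by split_ifs; exacts [le_rfl, jap_rpow_mul_inv_jap_sub_nonneg _ m n])
            (summable_jap_rpow_mul_inv_jap_sub hr m)
      _ ≤ (A + C) * (jap m)⁻¹ := hnear
      _ ≤ _ := le_mul_of_one_le_right (by have := inv_nonneg.2 (jap_pos m).le; positivity)
          (by linarith)
  · calc _ ≤ C * (jap m)⁻¹ * jap M ^ (-(2 * s)) := hfar m M (not_le.1 hm)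
      _ ≤ _ := by
          rw [zero_add]
          gcongr
          · exact inv_nonneg.2 (jap_pos m).le
          · linarith
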